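/- Let 𝔤 be a finite-dimensional real Lie algebra with a positive grading (V_t)_{t>0}, and suppose there exist 0 < t < s with ⁅V_t,V_s⁆ ≠ {0}. Then there exist X₁ ∈ V_t and X₂ ∈ V_s with ⁅X₁,X₂⁆ ≠ 0 such that, denoting by ĝ the Lie subalgebra of 𝔤 generated by X₁ and X₂, the following hold: (i) ĝ is a graded subalgebra, i.e., ĝ = ⨁_{u>0} (V_u ∩ ĝ); (ii) there exists a Lie algebra homomorphism φ from ĝ to the Lie algebra of 3×3 real matrices (with commutator bracket) such that φ(X₁) = E₁₂, φ(X₂) = E₂₃ (where E_{ij} is the matrix unit), the range of φ is exactly the space of strictly upper-triangular 3×3 matrices, and φ maps V_u ∩ ĝ into span{E₁₂} if u = t, into span{E₂₃} if u = s, into span{E₁₃} if u = t+s, and to 0 if u ∉ {t, s, t+s}. -/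

import Mathlib

/-- The matrix unit `E i j` in the 3×3 real matrices. -/
def E (i j : Fin 3) : Matrix (Fin 3) (Fin 3) ℝ := Matrix.single i j 1

attribute [local instance 100] LieRing.ofAssociativeRing

/-!
`X₃ := ⁅X₁, X₂⁆` has degree `t + s`, and a nonzero iterated bracket of `X₁` and `X₂` of length at
least three involves both of them, so it has degree `> t + s`. Hence `ĝ` lies in the span of
`X₁`, `X₂` and the components of degree `≥ t + s`, and modulo the components of degree `> t + s`
this span is the Heisenberg algebra. Independence of the grading gives functionals `f₁, f₂, f₃`
reading off the coefficients of `X₁, X₂, X₃` in their homogeneous components; the linear map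
`f₁ E₁₂ + f₂ E₂₃ + f₃ E₁₃` kills the degrees `> t + s` and sends the degrees `≥ t + s` into the
centre `ℝ E₁₃`, so it is a Lie algebra morphism on `ĝ`. Finally `ĝ` is graded because it is
generated by homogeneous elements.
-/

open LieSubalgebra Submodule

section Span

variable {R L M : Type*} [CommRing R] [LieRing L] [LieAlgebra R L] [LieRing M] [LieAlgebra R M]

theorem lie_mem_of_mem_span {s t : Set L} {N : Submodule R L}
    (h : ∀ x ∈ s, ∀ y ∈ t, ⁅x, y⁆ ∈ N) {x y : L} (hx : x ∈ span R s) (hy : y ∈ span R t) :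
    ⁅x, y⁆ ∈ N := by
  induction hx, hy using span_induction₂ with
  | mem_mem x y hx hy => exact h x hx y hy
  | zero_left y hy => simp
  | zero_right x hx => simp
  | add_left x y z _ _ _ hx hy => simpa [add_lie] using add_mem hx hy
  | add_right x y z _ _ _ hy hz => simpa [lie_add] using add_mem hy hz
  | smul_left r x y _ _ h => simpa [smul_lie] using N.smul_mem r h
  | smul_right r x y _ _ h => simpa [lie_smul] using N.smul_mem r h

theorem lie_mem_of_mem_iSup {ι κ : Sort*} {P : ι → Submodule R L} {Q : κ → Submodule R L}
    {N : Submodule R L} (h : ∀ i j, ∀ x ∈ P i, ∀ y ∈ Q j, ⁅x, y⁆ ∈ N) {x y : L}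
    (hx : x ∈ ⨆ i, P i) (hy : y ∈ ⨆ j, Q j) : ⁅x, y⁆ ∈ N := by
  rw [iSup_eq_span] at hx hy
  refine lie_mem_of_mem_span (fun x hx y hy => ?_) hx hy
  obtain ⟨i, hx⟩ := Set.mem_iUnion.1 hx
  obtain ⟨j, hy⟩ := Set.mem_iUnion.1 hy
  exact h i j x hx y hy

theorem LieSubalgebra.coe_lieSpan_eq_span_of_forall_lie_mem {s : Set L}
    (hs : ∀ x ∈ s, ∀ y ∈ s, ⁅x, y⁆ ∈ span R s) :
    (lieSpan R L s : Submodule R L) = span R s := by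
  refine le_antisymm ?_ submodule_span_le_lieSpan
  change _ ≤ ({ span R s with lie_mem' := lie_mem_of_mem_span hs } : LieSubalgebra R L)
  exact lieSpan_le.2 subset_span

theorem LinearMap.map_lie_of_mem_span (φ : L →ₗ[R] M) {s : Set L}
    (h : ∀ x ∈ s, ∀ y ∈ s, φ ⁅x, y⁆ = ⁅φ x, φ y⁆) {x y : L} (hx : x ∈ span R s)
    (hy : y ∈ span R s) : φ ⁅x, y⁆ = ⁅φ x, φ y⁆ := by
  induction hx, hy using span_induction₂ with
  | mem_mem x y hx hy => exact h x hx y hy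
  | zero_left y hy => simp
  | zero_right x hx => simp
  | add_left x y z _ _ _ hx hy => simp [add_lie, hx, hy]
  | add_right x y z _ _ _ hy hz => simp [lie_add, hy, hz]
  | smul_left r x y _ _ h => simp [smul_lie, h]
  | smul_right r x y _ _ h => simp [lie_smul, h]

end Span

theorem iSupIndep.exists_dual_eq_one {K M ι : Type*} [Field K] [AddCommGroup M] [Module K M]
    {V : ι → Submodule K M} (hV : iSupIndep V) {i : ι} {x : M} (hx : x ∈ V i) (hx0 : x ≠ 0) :
    ∃ f : Module.Dual K M, f x = 1 ∧ ∀ j ≠ i, ∀ y ∈ V j, f y = 0 := by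
  have hx' : x ∉ ⨆ (j) (_ : j ≠ i), V j := fun h => hx0 (disjoint_def.1 (hV i) x hx h)
  obtain ⟨g, hgx, hg⟩ := exists_le_ker_of_notMem hx'
  refine ⟨(g x)⁻¹ • g, by simp [hgx], fun j hj y hy => ?_⟩
  have : g y = 0 := hg (mem_iSup_of_mem j (mem_iSup_of_mem hj hy))
  simp [this]

section Grading

variable {R L : Type*} [CommRing R] [LieRing L] [LieAlgebra R L]

def IsPosGradedBracket (V : ℝ → Submodule R L) : Prop :=
  ∀ s t : ℝ, 0 < s → 0 < t → ∀ x ∈ V s, ∀ y ∈ V t, ⁅x, y⁆ ∈ V (s + t)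

variable {V : ℝ → Submodule R L}

theorem IsPosGradedBracket.lie_mem_iSup_lt (hV : IsPosGradedBracket V) {c : ℝ} (hc : 0 < c)
    {x y : L} (hx : x ∈ ⨆ a : {a : ℝ // 0 < a}, V a) (hy : y ∈ ⨆ b : {b : ℝ // c ≤ b}, V b) :
    ⁅x, y⁆ ∈ ⨆ w : {w : ℝ // c < w}, V w :=
  lie_mem_of_mem_iSup (P := fun a : {a : ℝ // 0 < a} => V a) (Q := fun b : {b : ℝ // c ≤ b} => V b)
    (fun a b x hx y hy => mem_iSup_of_mem ⟨a + b, by linarith [a.2, b.2]⟩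
      (hV a b a.2 (hc.trans_le b.2) x hx y hy)) hx hy

theorem IsPosGradedBracket.coe_lieSpan_eq_iSup_inf (hV : IsPosGradedBracket V) {s : Set L}
    (hs : ∀ x ∈ s, ∃ u, 0 < u ∧ x ∈ V u) :
    (lieSpan R L s : Submodule R L) =
      ⨆ u : {u : ℝ // 0 < u}, V u ⊓ (lieSpan R L s : Submodule R L) := by
  set G := lieSpan R L s
  set P : {u : ℝ // 0 < u} → Submodule R L := fun u => V u ⊓ G
  refine le_antisymm ?_ (iSup_le fun _ => inf_le_right)
  have hP {x y : L} (hx : x ∈ ⨆ u, P u) (hy : y ∈ ⨆ u, P u) : ⁅x, y⁆ ∈ ⨆ u, P u :=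
    lie_mem_of_mem_iSup (P := P) (Q := P) (fun a b x hx y hy =>
      mem_iSup_of_mem (p := P) ⟨a + b, add_pos a.2 b.2⟩
        ⟨hV a b a.2 b.2 x hx.1 y hy.1, G.lie_mem hx.2 hy.2⟩) hx hy
  change G ≤ { (⨆ u, P u) with lie_mem' := hP }
  refine lieSpan_le.2 fun x hx => ?_
  obtain ⟨u, hu, hxu⟩ := hs x hx
  exact mem_iSup_of_mem (p := P) ⟨u, hu⟩ ⟨hxu, subset_lieSpan hx⟩

theorem IsPosGradedBracket.lie_mem_iSup_lt_of_mem_union (hV : IsPosGradedBracket V) {t s : ℝ}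
    (ht : 0 < t) (hs : 0 < s) {X₁ X₂ x u : L} (hX₁ : X₁ ∈ V t) (hX₂ : X₂ ∈ V s)
    (hx : x ∈ ({X₁, X₂} ∪ ↑(⨆ w : {w : ℝ // t + s ≤ w}, V w) : Set L))
    (hu : u ∈ ⨆ w : {w : ℝ // t + s ≤ w}, V w) :
    ⁅x, u⁆ ∈ ⨆ w : {w : ℝ // t + s < w}, V w := by
  refine hV.lie_mem_iSup_lt (add_pos ht hs) ?_ hu
  rcases hx with (rfl | rfl) | hx
  · exact mem_iSup_of_mem (p := fun a : {a : ℝ // 0 < a} => V a) ⟨t, ht⟩ hX₁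
  · exact mem_iSup_of_mem (p := fun a : {a : ℝ // 0 < a} => V a) ⟨s, hs⟩ hX₂
  · have hpos : ⨆ w : {w : ℝ // t + s ≤ w}, V w ≤ ⨆ a : {a : ℝ // 0 < a}, V a :=
      iSup_le fun w => le_iSup_of_le (⟨w, by linarith [w.2]⟩ : {a : ℝ // 0 < a}) le_rfl
    exact hpos hx

theorem IsPosGradedBracket.coe_lieSpan_pair_le_span_union (hV : IsPosGradedBracket V) {t s : ℝ}
    (ht : 0 < t) (hs : 0 < s) {X₁ X₂ : L} (hX₁ : X₁ ∈ V t) (hX₂ : X₂ ∈ V s) :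
    (lieSpan R L {X₁, X₂} : Submodule R L) ≤
      span R ({X₁, X₂} ∪ ↑(⨆ w : {w : ℝ // t + s ≤ w}, V w)) := by
  set U := ⨆ w : {w : ℝ // t + s ≤ w}, V w
  set S : Set L := {X₁, X₂} ∪ U
  have hVU {w : ℝ} (hw : t + s ≤ w) : V w ≤ U := le_iSup_of_le (⟨w, hw⟩ : {w // t + s ≤ w}) le_rfl
  have hU : ∀ x ∈ S, ∀ u ∈ U, ⁅x, u⁆ ∈ span R S := fun x hx u hu =>
    subset_span <| Or.inr <| (iSup_le fun w => hVU w.2.le) <|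
      hV.lie_mem_iSup_lt_of_mem_union ht hs hX₁ hX₂ hx hu
  rw [← coe_lieSpan_eq_span_of_forall_lie_mem ?_]
  · exact lieSpan_mono Set.subset_union_left
  intro x hx y hy
  rcases hy with hy | hy
  · rcases hx with hx | hx
    · have h12 : ⁅X₁, X₂⁆ ∈ span R S :=
        subset_span (Or.inr (hVU le_rfl (hV t s ht hs _ hX₁ _ hX₂)))
      rcases hx with rfl | rfl <;> rcases hy with rfl | rfl
      · simp
      · exact h12
      · rw [← lie_skew]
        exact neg_mem h12
      · simp
    · rw [← lie_skew]
      exact neg_mem (hU y (Or.inl hy) x hx)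
  · exact hU x hx y hy

end Grading

section DegreeCoord

variable {K L : Type*} [Field K] [AddCommGroup L] [Module K L] {V : ℝ → Submodule K L}

structure IsDegreeCoord (V : ℝ → Submodule K L) (u : ℝ) (X : L) (f : Module.Dual K L) : Prop where
  apply_self : f X = 1
  eq_zero_of_mem : ∀ {w : ℝ}, 0 < w → w ≠ u → ∀ x ∈ V w, f x = 0

theorem exists_isDegreeCoord (hV : iSupIndep fun u : {u : ℝ // 0 < u} => V u) {u : ℝ}
    (hu : 0 < u) {X : L} (hX : X ∈ V u) (hX0 : X ≠ 0) : ∃ f, IsDegreeCoord V u X f := by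
  obtain ⟨f, hfX, hf⟩ := hV.exists_dual_eq_one (i := ⟨u, hu⟩) hX hX0
  exact ⟨f, hfX, fun hw hwu x hx => hf ⟨_, hw⟩ (fun h => hwu (congrArg Subtype.val h)) x hx⟩

theorem IsDegreeCoord.eq_zero_of_mem_iSup {u : ℝ} {X : L} {f : Module.Dual K L}
    (hf : IsDegreeCoord V u X f) (hu : 0 < u) {ι : Sort*} {d : ι → ℝ} (hd : ∀ i, u < d i)
    {x : L} (hx : x ∈ ⨆ i, V (d i)) : f x = 0 := by
  have hker : ⨆ i, V (d i) ≤ LinearMap.ker f :=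
    iSup_le fun i y hy => hf.eq_zero_of_mem (hu.trans (hd i)) (hd i).ne' y hy
  exact hker hx

end DegreeCoord

@[simp] theorem lie_E_zero_one_E_one_two : ⁅E 0 1, E 1 2⁆ = E 0 2 := by
  simp [E, Ring.lie_def, Matrix.single_mul_single_same, Matrix.single_mul_single_of_ne]

@[simp] theorem lie_E_zero_one_E_zero_two : ⁅E 0 1, E 0 2⁆ = 0 := by
  simp [E, Ring.lie_def, Matrix.single_mul_single_of_ne]

@[simp] theorem lie_E_one_two_E_zero_two : ⁅E 1 2, E 0 2⁆ = 0 := by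
  simp [E, Ring.lie_def, Matrix.single_mul_single_of_ne]

section HeisenbergMap

variable {L : Type*} [AddCommGroup L] [Module ℝ L] (f₁ f₂ f₃ : Module.Dual ℝ L)

def heisenbergMap : L →ₗ[ℝ] Matrix (Fin 3) (Fin 3) ℝ :=
  f₁.smulRight (E 0 1) + f₂.smulRight (E 1 2) + f₃.smulRight (E 0 2)

theorem heisenbergMap_apply (x : L) :
    heisenbergMap f₁ f₂ f₃ x = f₁ x • E 0 1 + f₂ x • E 1 2 + f₃ x • E 0 2 := rfl

theorem heisenbergMap_mem_span (x : L) :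
    heisenbergMap f₁ f₂ f₃ x ∈ span ℝ ({E 0 1, E 1 2, E 0 2} : Set (Matrix (Fin 3) (Fin 3) ℝ)) :=
  add_mem (add_mem (smul_mem _ _ (subset_span (by simp))) (smul_mem _ _ (subset_span (by simp))))
    (smul_mem _ _ (subset_span (by simp)))

theorem lie_heisenbergMap_E_zero_two (x : L) : ⁅heisenbergMap f₁ f₂ f₃ x, E 0 2⁆ = 0 := by
  simp [heisenbergMap_apply]

variable {V : ℝ → Submodule ℝ L} {t s : ℝ} {X₁ X₂ X₃ x : L} {f₁ f₂ f₃}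

theorem heisenbergMap_apply_of_mem_left (ht : 0 < t) (hts : t < s)
    (h₂ : IsDegreeCoord V s X₂ f₂) (h₃ : IsDegreeCoord V (t + s) X₃ f₃) (hx : x ∈ V t) :
    heisenbergMap f₁ f₂ f₃ x = f₁ x • E 0 1 := by
  rw [heisenbergMap_apply, h₂.eq_zero_of_mem ht hts.ne x hx,
    h₃.eq_zero_of_mem ht (by linarith) x hx]
  simp

theorem heisenbergMap_apply_of_mem_right (ht : 0 < t) (hts : t < s)
    (h₁ : IsDegreeCoord V t X₁ f₁) (h₃ : IsDegreeCoord V (t + s) X₃ f₃) (hx : x ∈ V s) :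
    heisenbergMap f₁ f₂ f₃ x = f₂ x • E 1 2 := by
  rw [heisenbergMap_apply, h₁.eq_zero_of_mem (ht.trans hts) hts.ne' x hx,
    h₃.eq_zero_of_mem (ht.trans hts) (by linarith) x hx]
  simp

theorem heisenbergMap_apply_of_mem_add (ht : 0 < t) (hs : 0 < s)
    (h₁ : IsDegreeCoord V t X₁ f₁) (h₂ : IsDegreeCoord V s X₂ f₂) (hx : x ∈ V (t + s)) :
    heisenbergMap f₁ f₂ f₃ x = f₃ x • E 0 2 := by
  rw [heisenbergMap_apply, h₁.eq_zero_of_mem (add_pos ht hs) (by linarith) x hx,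
    h₂.eq_zero_of_mem (add_pos ht hs) (by linarith) x hx]
  simp

theorem heisenbergMap_apply_of_mem_eq_zero (h₁ : IsDegreeCoord V t X₁ f₁)
    (h₂ : IsDegreeCoord V s X₂ f₂) (h₃ : IsDegreeCoord V (t + s) X₃ f₃) {u : ℝ} (hu : 0 < u)
    (hut : u ≠ t) (hus : u ≠ s) (huts : u ≠ t + s) (hx : x ∈ V u) :
    heisenbergMap f₁ f₂ f₃ x = 0 := by
  rw [heisenbergMap_apply, h₁.eq_zero_of_mem hu hut x hx, h₂.eq_zero_of_mem hu hus x hx,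
    h₃.eq_zero_of_mem hu huts x hx]
  simp

end HeisenbergMap

section HeisenbergLie

variable {L : Type*} [LieRing L] [LieAlgebra ℝ L] {V : ℝ → Submodule ℝ L} {t s : ℝ} {X₁ X₂ : L}
  {f₁ f₂ f₃ : Module.Dual ℝ L}

theorem heisenbergMap_generators (ht : 0 < t) (hts : t < s) (hX₁ : X₁ ∈ V t) (hX₂ : X₂ ∈ V s)
    (hX₃ : ⁅X₁, X₂⁆ ∈ V (t + s)) (h₁ : IsDegreeCoord V t X₁ f₁)
    (h₂ : IsDegreeCoord V s X₂ f₂) (h₃ : IsDegreeCoord V (t + s) ⁅X₁, X₂⁆ f₃) :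
    heisenbergMap f₁ f₂ f₃ X₁ = E 0 1 ∧ heisenbergMap f₁ f₂ f₃ X₂ = E 1 2 ∧
      heisenbergMap f₁ f₂ f₃ ⁅X₁, X₂⁆ = E 0 2 := by
  refine ⟨?_, ?_, ?_⟩
  · rw [heisenbergMap_apply_of_mem_left ht hts h₂ h₃ hX₁, h₁.apply_self, one_smul]
  · rw [heisenbergMap_apply_of_mem_right ht hts h₁ h₃ hX₂, h₂.apply_self, one_smul]
  · rw [heisenbergMap_apply_of_mem_add ht (ht.trans hts) h₁ h₂ hX₃, h₃.apply_self, one_smul]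

theorem map_heisenbergMap_lieSpan (ht : 0 < t) (hts : t < s) (hX₁ : X₁ ∈ V t)
    (hX₂ : X₂ ∈ V s) (hX₃ : ⁅X₁, X₂⁆ ∈ V (t + s)) (h₁ : IsDegreeCoord V t X₁ f₁)
    (h₂ : IsDegreeCoord V s X₂ f₂) (h₃ : IsDegreeCoord V (t + s) ⁅X₁, X₂⁆ f₃) :
    (lieSpan ℝ L {X₁, X₂} : Submodule ℝ L).map (heisenbergMap f₁ f₂ f₃) =
      span ℝ {E 0 1, E 1 2, E 0 2} := by
  obtain ⟨hφ₁, hφ₂, hφ₃⟩ := heisenbergMap_generators ht hts hX₁ hX₂ hX₃ h₁ h₂ h₃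
  have hG₁ : X₁ ∈ lieSpan ℝ L {X₁, X₂} := subset_lieSpan (by simp)
  have hG₂ : X₂ ∈ lieSpan ℝ L {X₁, X₂} := subset_lieSpan (by simp)
  refine le_antisymm (map_le_iff_le_comap.2 fun x _ => heisenbergMap_mem_span f₁ f₂ f₃ x) ?_
  refine span_le.2 ?_
  rintro _ (rfl | rfl | rfl)
  exacts [⟨X₁, hG₁, hφ₁⟩, ⟨X₂, hG₂, hφ₂⟩, ⟨_, (lieSpan ℝ L {X₁, X₂}).lie_mem hG₁ hG₂, hφ₃⟩]

theorem heisenbergMap_lie (hV : IsPosGradedBracket V) (ht : 0 < t) (hts : t < s)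
    (hX₁ : X₁ ∈ V t) (hX₂ : X₂ ∈ V s) (h₁ : IsDegreeCoord V t X₁ f₁)
    (h₂ : IsDegreeCoord V s X₂ f₂) (h₃ : IsDegreeCoord V (t + s) ⁅X₁, X₂⁆ f₃) {x y : L}
    (hx : x ∈ lieSpan ℝ L {X₁, X₂}) (hy : y ∈ lieSpan ℝ L {X₁, X₂}) :
    heisenbergMap f₁ f₂ f₃ ⁅x, y⁆ = ⁅heisenbergMap f₁ f₂ f₃ x, heisenbergMap f₁ f₂ f₃ y⁆ := by
  have hs : 0 < s := ht.trans hts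
  set φ := heisenbergMap f₁ f₂ f₃
  set U := ⨆ w : {w : ℝ // t + s ≤ w}, V w
  have hle := hV.coe_lieSpan_pair_le_span_union ht hs hX₁ hX₂
  refine φ.map_lie_of_mem_span (s := {X₁, X₂} ∪ U) ?_ (hle hx) (hle hy)
  have hφU : ∀ u ∈ U, φ u = f₃ u • E 0 2 := fun u hu => by
    rw [heisenbergMap_apply, h₁.eq_zero_of_mem_iSup ht (fun w => by linarith [w.2]) hu,
      h₂.eq_zero_of_mem_iSup hs (fun w => by linarith [w.2]) hu]
    simp
  have hφU' : ∀ z ∈ ⨆ w : {w : ℝ // t + s < w}, V w, φ z = 0 := fun z hz => by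
    rw [heisenbergMap_apply, h₁.eq_zero_of_mem_iSup ht (fun w => by linarith [w.2]) hz,
      h₂.eq_zero_of_mem_iSup hs (fun w => by linarith [w.2]) hz,
      h₃.eq_zero_of_mem_iSup (add_pos ht hs) (fun w => w.2) hz]
    simp
  have hU : ∀ z ∈ ({X₁, X₂} ∪ U : Set L), ∀ u ∈ U, φ ⁅z, u⁆ = ⁅φ z, φ u⁆ := fun z hz u hu => by
    rw [hφU' _ (hV.lie_mem_iSup_lt_of_mem_union ht hs hX₁ hX₂ hz hu), hφU u hu, lie_smul,
      lie_heisenbergMap_E_zero_two, smul_zero]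
  obtain ⟨hφ₁, hφ₂, hφ₃⟩ :=
    heisenbergMap_generators ht hts hX₁ hX₂ (hV t s ht hs _ hX₁ _ hX₂) h₁ h₂ h₃
  intro x hx y hy
  rcases hy with hy | hy
  · rcases hx with hx | hx
    · rcases hx with rfl | rfl <;> rcases hy with rfl | rfl
      · simp
      · rw [hφ₁, hφ₂, hφ₃, lie_E_zero_one_E_one_two]
      · rw [← lie_skew, map_neg, hφ₁, hφ₂, hφ₃, ← lie_skew, lie_E_zero_one_E_one_two]
      · simp
    · rw [← lie_skew, map_neg, hU y (Or.inl hy) x hx, lie_skew]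
  · exact hU x hx y hy

end HeisenbergLie

theorem statement10 {L : Type*} [LieRing L] [LieAlgebra ℝ L]
    (V : ℝ → Submodule ℝ L)
    (hindep : iSupIndep (fun t : {t : ℝ // 0 < t} => V t))
    (hgrad : ∀ s t : ℝ, 0 < s → 0 < t → ∀ x ∈ V s, ∀ y ∈ V t, ⁅x, y⁆ ∈ V (s + t))
    (t s : ℝ) (ht : 0 < t) (hts : t < s)
    (hnc : ∃ x ∈ V t, ∃ y ∈ V s, ⁅x, y⁆ ≠ 0) :
    ∃ X₁ X₂ : L, X₁ ∈ V t ∧ X₂ ∈ V s ∧ ⁅X₁, X₂⁆ ≠ 0 ∧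
      ∀ gHat : LieSubalgebra ℝ L, gHat = LieSubalgebra.lieSpan ℝ L {X₁, X₂} →
        (gHat.toSubmodule = ⨆ u : {u : ℝ // 0 < u}, (V u.1 ⊓ gHat.toSubmodule)) ∧
        ∃ φ : gHat →ₗ⁅ℝ⁆ Matrix (Fin 3) (Fin 3) ℝ,
          (∀ x : gHat, (x : L) = X₁ → φ x = E 0 1) ∧
          (∀ x : gHat, (x : L) = X₂ → φ x = E 1 2) ∧
          (∀ M : Matrix (Fin 3) (Fin 3) ℝ,
            (∃ x : gHat, φ x = M) ↔
              M ∈ Submodule.span ℝ ({E 0 1, E 1 2, E 0 2} :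
                Set (Matrix (Fin 3) (Fin 3) ℝ))) ∧
          (∀ x : gHat, (x : L) ∈ V t → φ x ∈ Submodule.span ℝ ({E 0 1} :
            Set (Matrix (Fin 3) (Fin 3) ℝ))) ∧
          (∀ x : gHat, (x : L) ∈ V s → φ x ∈ Submodule.span ℝ ({E 1 2} :
            Set (Matrix (Fin 3) (Fin 3) ℝ))) ∧
          (∀ x : gHat, (x : L) ∈ V (t + s) → φ x ∈ Submodule.span ℝ ({E 0 2} :
            Set (Matrix (Fin 3) (Fin 3) ℝ))) ∧
          (∀ u : ℝ, 0 < u → u ≠ t → u ≠ s → u ≠ t + s →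
            ∀ x : gHat, (x : L) ∈ V u → φ x = 0) := by
  obtain ⟨X₁, hX₁, X₂, hX₂, hne⟩ := hnc
  have hV : IsPosGradedBracket V := hgrad
  have hs : 0 < s := ht.trans hts
  have hX₃ : ⁅X₁, X₂⁆ ∈ V (t + s) := hgrad t s ht hs X₁ hX₁ X₂ hX₂
  obtain ⟨f₁, h₁⟩ := exists_isDegreeCoord hindep ht hX₁ (by rintro rfl; simp at hne)
  obtain ⟨f₂, h₂⟩ := exists_isDegreeCoord hindep hs hX₂ (by rintro rfl; simp at hne)
  obtain ⟨f₃, h₃⟩ := exists_isDegreeCoord hindep (add_pos ht hs) hX₃ hne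
  obtain ⟨hφ₁, hφ₂, hφ₃⟩ := heisenbergMap_generators ht hts hX₁ hX₂ hX₃ h₁ h₂ h₃
  refine ⟨X₁, X₂, hX₁, hX₂, hne, ?_⟩
  rintro _ rfl
  have hrange := map_heisenbergMap_lieSpan ht hts hX₁ hX₂ hX₃ h₁ h₂ h₃
  let φ : lieSpan ℝ L {X₁, X₂} →ₗ⁅ℝ⁆ Matrix (Fin 3) (Fin 3) ℝ :=
    { heisenbergMap f₁ f₂ f₃ ∘ₗ (lieSpan ℝ L {X₁, X₂} : Submodule ℝ L).subtype with
      map_lie' := fun {x y} => heisenbergMap_lie hV ht hts hX₁ hX₂ h₁ h₂ h₃ x.2 y.2 }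
  have hφ (x : lieSpan ℝ L {X₁, X₂}) : φ x = heisenbergMap f₁ f₂ f₃ x := rfl
  refine ⟨hV.coe_lieSpan_eq_iSup_inf ?_, φ, fun x hx => ?_, fun x hx => ?_, fun M => ?_,
    fun x hx => ?_, fun x hx => ?_, fun x hx => ?_, fun u hu hut hus huts x hx => ?_⟩
  · rintro x (rfl | rfl)
    exacts [⟨t, ht, hX₁⟩, ⟨s, hs, hX₂⟩]
  · rw [hφ, hx, hφ₁]
  · rw [hφ, hx, hφ₂]
  · simp [← hrange, hφ]
  · exact mem_span_singleton.2 ⟨_, (heisenbergMap_apply_of_mem_left ht hts h₂ h₃ hx).symm⟩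
  · exact mem_span_singleton.2 ⟨_, (heisenbergMap_apply_of_mem_right ht hts h₁ h₃ hx).symm⟩
  · exact mem_span_singleton.2 ⟨_, (heisenbergMap_apply_of_mem_add ht hs h₁ h₂ hx).symm⟩
  · exact heisenbergMap_apply_of_mem_eq_zero h₁ h₂ h₃ hu hut hus huts hx
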